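/- arXiv:1605.00317 — 2 statements merged into one kernel-verified Lean document; each statement's English description precedes it below -/
import Mathlib

section
/- Let 0 ≤ ε₁ ≤ ε₂ ≤ 1 and α ∈ [0,1]. Define the two density evolution sequences x_0^{(i)} = ε_i and x_{ℓ+1}^{(i)} = f(x_ℓ^{(i)}, ε_i, α) for i = 1, 2. Then x_ℓ^{(1)} ≤ x_ℓ^{(2)} for all ℓ ≥ 0, and the limits L(ε₁) and L(ε₂) of the two sequences (which exist) satisfy L(ε₁) ≤ L(ε₂): the asymptotic error probability under density evolution is monotone nondecreasing in the channel erasure probability ε. -/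
/-- Density evolution map of the peeling decoder with missing connections for
the (dv,dc)-regular LDPC ensemble over the BEC. -/
noncomputable def peelDE (dv dc : ℕ) (x ε α : ℝ) : ℝ :=
  ε * (α + (1 - α) * (1 - ((1 - x) * (1 - α)) ^ (dc - 1))) ^ (dv - 1)

lemma bracket_mem (dc : ℕ) (x α : ℝ) (hx0 : 0 ≤ x) (hx1 : x ≤ 1)
    (hα0 : 0 ≤ α) (hα1 : α ≤ 1) :
    0 ≤ α + (1 - α) * (1 - ((1 - x) * (1 - α)) ^ (dc - 1)) ∧
      α + (1 - α) * (1 - ((1 - x) * (1 - α)) ^ (dc - 1)) ≤ 1 := by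
  have hb0 : 0 ≤ (1 - x) * (1 - α) := by nlinarith
  have hb1 : (1 - x) * (1 - α) ≤ 1 := by nlinarith
  have hp0 : 0 ≤ ((1 - x) * (1 - α)) ^ (dc - 1) := pow_nonneg hb0 _
  have hp1 : ((1 - x) * (1 - α)) ^ (dc - 1) ≤ 1 := pow_le_one₀ hb0 hb1
  constructor <;> nlinarith

lemma bracket_mono (dc : ℕ) (x y α : ℝ) (hxy : x ≤ y) (hy : y ≤ 1)
    (hα0 : 0 ≤ α) (hα1 : α ≤ 1) :
    α + (1 - α) * (1 - ((1 - x) * (1 - α)) ^ (dc - 1)) ≤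
      α + (1 - α) * (1 - ((1 - y) * (1 - α)) ^ (dc - 1)) := by
  have hb0 : 0 ≤ (1 - y) * (1 - α) := by nlinarith
  have hble : (1 - y) * (1 - α) ≤ (1 - x) * (1 - α) := by nlinarith
  have hp : ((1 - y) * (1 - α)) ^ (dc - 1) ≤ ((1 - x) * (1 - α)) ^ (dc - 1) :=
    pow_le_pow_left₀ hb0 hble _
  nlinarith

lemma peelDE_nonneg (dv dc : ℕ) (x ε α : ℝ) (hx0 : 0 ≤ x) (hx1 : x ≤ 1)
    (hε0 : 0 ≤ ε) (hα0 : 0 ≤ α) (hα1 : α ≤ 1) :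
    0 ≤ peelDE dv dc x ε α := by
  obtain ⟨h1, _⟩ := bracket_mem dc x α hx0 hx1 hα0 hα1
  exact mul_nonneg hε0 (pow_nonneg h1 _)

lemma peelDE_le_eps (dv dc : ℕ) (x ε α : ℝ) (hx0 : 0 ≤ x) (hx1 : x ≤ 1)
    (hε0 : 0 ≤ ε) (hα0 : 0 ≤ α) (hα1 : α ≤ 1) :
    peelDE dv dc x ε α ≤ ε := by
  obtain ⟨h1, h2⟩ := bracket_mem dc x α hx0 hx1 hα0 hα1
  calc ε * (α + (1 - α) * (1 - ((1 - x) * (1 - α)) ^ (dc - 1))) ^ (dv - 1)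
      ≤ ε * 1 := by
        exact mul_le_mul_of_nonneg_left (pow_le_one₀ h1 h2) hε0
    _ = ε := mul_one ε

lemma peelDE_mono (dv dc : ℕ) (x y ε ε' α : ℝ) (hx0 : 0 ≤ x) (hxy : x ≤ y)
    (hy : y ≤ 1) (hε0 : 0 ≤ ε) (hεε : ε ≤ ε') (hα0 : 0 ≤ α) (hα1 : α ≤ 1) :
    peelDE dv dc x ε α ≤ peelDE dv dc y ε' α := by
  obtain ⟨h1, _⟩ := bracket_mem dc x α hx0 (hxy.trans hy) hα0 hα1
  obtain ⟨h1', _⟩ := bracket_mem dc y α (hx0.trans hxy) hy hα0 hα1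
  have hb := bracket_mono dc x y α hxy hy hα0 hα1
  exact mul_le_mul hεε (pow_le_pow_left₀ h1 hb _) (pow_nonneg h1 _)
    (hε0.trans hεε)

/-- Coupling monotonicity in the channel erasure probability: for
`0 ≤ ε₁ ≤ ε₂ ≤ 1` and `α ∈ [0,1]`, the DE sequences of the peeling decoder
with missing connections started at `ε₁` and `ε₂` are pointwise ordered, and
their limits (which exist) satisfy `L(ε₁) ≤ L(ε₂)`. -/
theorem peelDE_monotone_in_eps (dv dc : ℕ) (hdv : 2 ≤ dv) (hdc : 2 ≤ dc)
    (ε₁ ε₂ α : ℝ) (h0 : 0 ≤ ε₁) (h12 : ε₁ ≤ ε₂) (h21 : ε₂ ≤ 1)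
    (hα : α ∈ Set.Icc (0 : ℝ) 1)
    (xs₁ xs₂ : ℕ → ℝ) (hxs₁0 : xs₁ 0 = ε₁) (hxs₂0 : xs₂ 0 = ε₂)
    (hxs₁ : ∀ ℓ : ℕ, xs₁ (ℓ + 1) = peelDE dv dc (xs₁ ℓ) ε₁ α)
    (hxs₂ : ∀ ℓ : ℕ, xs₂ (ℓ + 1) = peelDE dv dc (xs₂ ℓ) ε₂ α) :
    (∀ ℓ : ℕ, xs₁ ℓ ≤ xs₂ ℓ) ∧
    ∃ L₁ L₂ : ℝ, Filter.Tendsto xs₁ Filter.atTop (nhds L₁) ∧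
      Filter.Tendsto xs₂ Filter.atTop (nhds L₂) ∧ L₁ ≤ L₂ := by
  obtain ⟨hα0, hα1⟩ := hα
  have hε10 : 0 ≤ ε₂ := h0.trans h12
  have hε11 : ε₁ ≤ 1 := h12.trans h21
  -- simultaneous bounds by induction
  have key : ∀ ℓ, 0 ≤ xs₁ ℓ ∧ xs₁ ℓ ≤ xs₂ ℓ ∧ xs₂ ℓ ≤ 1 := by
    intro ℓ
    induction ℓ with
    | zero => exact ⟨by rw [hxs₁0]; exact h0, by rw [hxs₁0, hxs₂0]; exact h12,
        by rw [hxs₂0]; exact h21⟩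
    | succ n ih =>
      obtain ⟨ih0, ih12, ih1⟩ := ih
      refine ⟨?_, ?_, ?_⟩
      · rw [hxs₁ n]
        exact peelDE_nonneg dv dc _ _ _ ih0 ((ih12.trans ih1)) h0 hα0 hα1
      · rw [hxs₁ n, hxs₂ n]
        exact peelDE_mono dv dc _ _ _ _ _ ih0 ih12 ih1 h0 h12 hα0 hα1
      · rw [hxs₂ n]
        exact (peelDE_le_eps dv dc _ _ _ (ih0.trans ih12) ih1 hε10 hα0 hα1).trans h21
  refine ⟨fun ℓ => (key ℓ).2.1, ?_⟩
  -- both sequences are antitone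
  have anti : ∀ (xs : ℕ → ℝ) (ε : ℝ), 0 ≤ ε → ε ≤ 1 → xs 0 = ε →
      (∀ ℓ, xs (ℓ + 1) = peelDE dv dc (xs ℓ) ε α) →
      (∀ ℓ, 0 ≤ xs ℓ ∧ xs ℓ ≤ 1) → Antitone xs := by
    intro xs ε hε0 hε1 hxs0 hrec hbnd
    have step : ∀ ℓ, xs (ℓ + 1) ≤ xs ℓ := by
      intro ℓ
      induction ℓ with
      | zero =>
        rw [hrec 0, hxs0]
        exact peelDE_le_eps dv dc _ _ _ (hxs0 ▸ hε0) (hxs0 ▸ hε1) hε0 hα0 hα1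
      | succ n ih =>
        have ih' := ih
        have h0' := (hbnd (n + 1)).1
        rw [hrec n] at ih' h0'
        rw [hrec (n + 1), hrec n]
        exact peelDE_mono dv dc _ _ _ _ _ h0' ih' (hbnd n).2 hε0 le_rfl hα0 hα1
    exact antitone_nat_of_succ_le step
  have hb1 : ∀ ℓ, 0 ≤ xs₁ ℓ ∧ xs₁ ℓ ≤ 1 := fun ℓ =>
    ⟨(key ℓ).1, ((key ℓ).2.1).trans (key ℓ).2.2⟩
  have hb2 : ∀ ℓ, 0 ≤ xs₂ ℓ ∧ xs₂ ℓ ≤ 1 := fun ℓ =>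
    ⟨(key ℓ).1.trans (key ℓ).2.1, (key ℓ).2.2⟩
  have ha1 := anti xs₁ ε₁ h0 hε11 hxs₁0 hxs₁ hb1
  have ha2 := anti xs₂ ε₂ hε10 h21 hxs₂0 hxs₂ hb2
  have hbdd1 : BddBelow (Set.range xs₁) := ⟨0, fun y ⟨ℓ, hℓ⟩ => hℓ ▸ (hb1 ℓ).1⟩
  have hbdd2 : BddBelow (Set.range xs₂) := ⟨0, fun y ⟨ℓ, hℓ⟩ => hℓ ▸ (hb2 ℓ).1⟩
  have ht1 := tendsto_atTop_ciInf ha1 hbdd1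
  have ht2 := tendsto_atTop_ciInf ha2 hbdd2
  exact ⟨_, _, ht1, ht2, le_of_tendsto_of_tendsto' ht1 ht2 fun ℓ => (key ℓ).2.1⟩
end

section
/- Let ε ∈ (0, 1/2) and α ∈ (0, 1). Then f_GB(0, ε, α) > 0; in particular x = 0 is not a fixed point of x ↦ f_GB(x, ε, α), so the asymptotic decoding error probability of the Gallager B decoder with missing connections cannot be driven to zero. -/
/-- Probability that a check-to-variable message is "?". -/
noncomputable def p0 (dc : ℕ) (α : ℝ) : ℝ := 1 - (1 - α) ^ (dc - 1)

/-- Probability that a check-to-variable message is `+1`. -/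
noncomputable def pPlus (dc : ℕ) (α x : ℝ) : ℝ :=
  (1 - α) ^ (dc - 1) * (1 + (1 - 2 * x) ^ (dc - 1)) / 2

/-- Probability that a check-to-variable message is `-1`. -/
noncomputable def pMinus (dc : ℕ) (α x : ℝ) : ℝ :=
  (1 - α) ^ (dc - 1) * (1 - (1 - 2 * x) ^ (dc - 1)) / 2

/-- Density evolution map of the Gallager B decoder (majority threshold
`b = ⌊(dv+1)/2⌋`) with missing connections for the (dv,dc)-regular LDPC
ensemble over the BSC. -/
noncomputable def gallagerB_DE (dv dc : ℕ) (x ε α : ℝ) : ℝ :=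
  ∑ v ∈ Finset.Icc ((dv + 1) / 2) (dv - 1),
    (Nat.choose (dv - 1) v : ℝ) * (1 - α) ^ v * α ^ (dv - 1 - v) *
      ((1 - ε) * pMinus dc α x ^ v * (1 - pMinus dc α x) ^ (dv - 1 - v) +
       ε * (1 - pPlus dc α x ^ v * (1 - pPlus dc α x) ^ (dv - 1 - v)))


open Set

lemma pMinus_zero (dc : ℕ) (α : ℝ) : pMinus dc α 0 = 0 := by
  simp [pMinus]

lemma pPlus_zero (dc : ℕ) (α : ℝ) : pPlus dc α 0 = (1 - α) ^ (dc - 1) := by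
  simp only [pPlus, mul_zero, sub_zero, one_pow]
  ring

lemma pPlus_zero_mem_Ioo {dc : ℕ} (hdc : 2 ≤ dc) {α : ℝ} (hα : α ∈ Ioo 0 1) :
    pPlus dc α 0 ∈ Ioo 0 1 := by
  rw [pPlus_zero]
  exact ⟨pow_pos (by linarith [hα.2]) _,
    pow_lt_one₀ (by linarith [hα.2]) (by linarith [hα.1]) (by omega)⟩

lemma pow_mul_one_sub_pow_lt_one {p : ℝ} (hp₀ : 0 ≤ p) (hp₁ : p < 1) {m : ℕ} (hm : m ≠ 0)
    (n : ℕ) : p ^ m * (1 - p) ^ n < 1 :=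
  calc p ^ m * (1 - p) ^ n ≤ p ^ m :=
        mul_le_of_le_one_right (pow_nonneg hp₀ m) (pow_le_one₀ (by linarith) (by linarith))
    _ < 1 := pow_lt_one₀ hp₀ hp₁ hm

/-- At `x = 0` no check node ever sends `-1`, so only the channel-error term `ε · (…)` of each
summand survives, and it is positive because `pPlus` stays strictly below `1` when `α > 0`. -/
theorem gallagerB_DE_zero_pos {dv dc : ℕ} (hdv : 2 ≤ dv) (hdc : 2 ≤ dc) {ε α : ℝ}
    (hε : 0 < ε) (hα : α ∈ Ioo 0 1) : 0 < gallagerB_DE dv dc 0 ε α := by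
  obtain ⟨hq₀, hq₁⟩ := pPlus_zero_mem_Ioo hdc hα
  refine Finset.sum_pos (fun v hv => ?_) (Finset.nonempty_Icc.mpr (by omega))
  obtain ⟨hv_lo, hv_hi⟩ := Finset.mem_Icc.mp hv
  have hv₀ : v ≠ 0 := by omega
  rw [pMinus_zero, zero_pow hv₀, mul_zero, zero_mul, zero_add]
  have hchoose : (0 : ℝ) < (dv - 1).choose v := by exact_mod_cast Nat.choose_pos hv_hi
  have herr : 0 < 1 - pPlus dc α 0 ^ v * (1 - pPlus dc α 0) ^ (dv - 1 - v) :=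
    sub_pos.mpr (pow_mul_one_sub_pow_lt_one hq₀.le hq₁ hv₀ _)
  have hα₁ : 0 < 1 - α := sub_pos.mpr hα.2
  have hα₀ : 0 < α := hα.1
  positivity

/-- For `ε ∈ (0,1/2)` and `α ∈ (0,1)`, the Gallager B DE map with missing
connections satisfies `f_GB(0,ε,α) > 0`; in particular `0` is not a fixed
point, so the asymptotic error probability cannot be driven to zero. -/
theorem gallagerB_DE_zero_not_fixedPoint (dv dc : ℕ) (hdv : 2 ≤ dv) (hdc : 2 ≤ dc)
    (ε α : ℝ) (hε : ε ∈ Set.Ioo (0 : ℝ) (1 / 2)) (hα : α ∈ Set.Ioo (0 : ℝ) 1) :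
    0 < gallagerB_DE dv dc 0 ε α ∧
    (0 : ℝ) ≠ gallagerB_DE dv dc 0 ε α := by
  have hpos := gallagerB_DE_zero_pos hdv hdc hε.1 hα
  exact ⟨hpos, hpos.ne⟩
end
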